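/- arXiv:2202.00197 — 2 statements merged into one kernel-verified Lean document; each statement's English description precedes it below -/
import Mathlib

section
/- Let Δ be a simplicial complex on V = {v₁,…,vₙ}, let P denote the set of P-positions of simplicial Nim on Δ, and let G = (g₁,…,gₙ) be a collection of impartial game positions. Then the simplicial emperor sum Δ(G) is a P-position if and only if (Pl(g₁),…,Pl(gₙ)) ∈ P and every gᵢ is a P-position. -/
universe u

/-- N-positions of an impartial game with move relation `r`:
`g` is an N-position iff some option of `g` is a P-position
(i.e. all of whose options are again N-positions). -/
inductive NPos {α : Type u} (r : α → α → Prop) : α → Prop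
  | intro (g g' : α) (hm : r g g') (hp : ∀ x, r g' x → NPos r x) : NPos r g

/-- P-position: every option is an N-position (terminal positions are P-positions). -/
def PPos {α : Type u} (r : α → α → Prop) (g : α) : Prop :=
  ∀ g', r g g' → NPos r g'

/-- The P-position length: `0` for terminal positions, and otherwise
`sup {Pl g' + 1 | g' a P-position strictly following g}` (with `sSup ∅ = 0`). -/
noncomputable def Pl {α : Type u} (r : α → α → Prop)
    (h : WellFounded (Function.swap r)) : α → ℕ :=
  h.transGen.fix fun _g ih =>
    sSup {m | ∃ g', ∃ hg : Relation.TransGen (Function.swap r) g' _g,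
      PPos r g' ∧ m = ih g' hg + 1}

/-- Simplicial nim move on the complex `Δ`: choose a nonempty face `F ∈ Δ` and
remove a positive number of stones from every vertex of `F`. -/
def SNimMove {n : ℕ} (Δ : Set (Finset (Fin n))) (a b : Fin n → ℕ) : Prop :=
  ∃ F ∈ Δ, F.Nonempty ∧ (∀ v ∈ F, b v < a v) ∧ ∀ v ∉ F, b v = a v

/-- Simplicial emperor sum move: choose a face `F ∈ Δ`, replace each component on a
vertex of `F` by a strict follower, each other component by itself or an option,
with at least one component changed. -/
def SEmpMove {n : ℕ} {α : Fin n → Type u} (Δ : Set (Finset (Fin n)))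
    (r : ∀ i, α i → α i → Prop) (G G' : ∀ i, α i) : Prop :=
  ∃ F ∈ Δ, (∀ i ∈ F, Relation.TransGen (r i) (G i) (G' i)) ∧
    (∀ i ∉ F, G' i = G i ∨ r i (G i) (G' i)) ∧ G' ≠ G

/-- Emperor sum move: choose one index `i`, replace `G i` by a strict follower,
and every other component by itself or one of its options. -/
def EmpMove {n : ℕ} {α : Fin n → Type u} (r : ∀ i, α i → α i → Prop)
    (G G' : ∀ i, α i) : Prop :=
  ∃ i, Relation.TransGen (r i) (G i) (G' i) ∧
    ∀ j, j ≠ i → (G' j = G j ∨ r j (G j) (G' j))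

open Relation

section Basics

variable {β : Type u} {r : β → β → Prop}

theorem npos_iff {g : β} : NPos r g ↔ ∃ g', r g g' ∧ PPos r g' := by
  constructor
  · rintro ⟨g0, g1, hm, hp⟩
    exact ⟨g1, hm, hp⟩
  · rintro ⟨g', hm, hp⟩
    exact NPos.intro _ g' hm hp

theorem ppos_npos_false (h : WellFounded (Function.swap r)) :
    ∀ g : β, PPos r g → NPos r g → False := by
  intro g
  refine WellFounded.induction (C := fun g => PPos r g → NPos r g → False) h g ?_
  intro x ih hP hN
  obtain ⟨x', hm, hp'⟩ := npos_iff.mp hN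
  exact ih x' hm hp' (hP x' hm)

theorem ppos_of_not_npos (h : WellFounded (Function.swap r)) :
    ∀ g : β, ¬ NPos r g → PPos r g := by
  intro g
  refine WellFounded.induction (C := fun g => ¬ NPos r g → PPos r g) h.transGen g ?_
  intro x ih hn g' hr
  have hnp : ¬ PPos r g' := fun hp => hn (NPos.intro x g' hr hp)
  have hex : ∃ y, r g' y ∧ ¬ NPos r y := by
    by_contra hc
    push_neg at hc
    exact hnp fun y hy => hc y hy
  obtain ⟨y, hy, hny⟩ := hex
  have hty : Relation.TransGen (Function.swap r) y x :=
    Relation.TransGen.tail (Relation.TransGen.single hy) hr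
  exact NPos.intro g' y hy (ih y hty hny)

theorem npos_of_not_ppos (h : WellFounded (Function.swap r)) {g : β}
    (hg : ¬ PPos r g) : NPos r g :=
  by_contra fun hn => hg (ppos_of_not_npos h g hn)

theorem ne_of_transGen (h : WellFounded (Function.swap r)) {x y : β}
    (ht : Relation.TransGen r x y) : y ≠ x := by
  intro heq
  rw [heq] at ht
  have ht' : Relation.TransGen (Function.swap r) x x := Relation.transGen_swap.mpr ht
  exact h.transGen.asymmetric _ _ ht' ht'

theorem Pl_eq (h : WellFounded (Function.swap r)) (g : β) :
    Pl r h g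
      = sSup {m | ∃ g', Relation.TransGen r g g' ∧ PPos r g' ∧ m = Pl r h g' + 1} := by
  unfold Pl
  rw [WellFounded.fix_eq]
  congr 1
  ext m
  constructor
  · rintro ⟨g', hg, hp, rfl⟩
    exact ⟨g', Relation.transGen_swap.mp hg, hp, rfl⟩
  · rintro ⟨g', hg, hp, rfl⟩
    exact ⟨g', Relation.transGen_swap.mpr hg, hp, rfl⟩

theorem plSet_finite (h : WellFounded (Function.swap r)) {g : β}
    (hfin : {y | Relation.TransGen r g y}.Finite) :
    {m | ∃ g', Relation.TransGen r g g' ∧ PPos r g' ∧ m = Pl r h g' + 1}.Finite := by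
  apply (hfin.image (fun g' => Pl r h g' + 1)).subset
  rintro m ⟨g', h1, _, rfl⟩
  exact ⟨g', h1, rfl⟩

theorem Pl_lt (h : WellFounded (Function.swap r)) {g g' : β}
    (hfin : {y | Relation.TransGen r g y}.Finite)
    (ht : Relation.TransGen r g g') (hp : PPos r g') : Pl r h g' < Pl r h g := by
  have hmem : Pl r h g' + 1
      ∈ {m | ∃ g'', Relation.TransGen r g g'' ∧ PPos r g'' ∧ m = Pl r h g'' + 1} :=
    ⟨g', ht, hp, rfl⟩
  have hle := le_csSup (plSet_finite h hfin).bddAbove hmem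
  rw [← Pl_eq] at hle
  omega

theorem pl_pos_cases (h : WellFounded (Function.swap r)) {g : β}
    (hfin : {y | Relation.TransGen r g y}.Finite) (hpos : 0 < Pl r h g) :
    ∃ g', Relation.TransGen r g g' ∧ PPos r g' ∧ Pl r h g' + 1 = Pl r h g := by
  have hne : {m | ∃ g', Relation.TransGen r g g' ∧ PPos r g' ∧ m = Pl r h g' + 1}.Nonempty := by
    rcases Set.eq_empty_or_nonempty
      {m | ∃ g', Relation.TransGen r g g' ∧ PPos r g' ∧ m = Pl r h g' + 1} with he | hne
    · rw [Pl_eq h g, he] at hpos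
      simp [csSup_empty] at hpos
    · exact hne
  have hmem := Nat.sSup_mem hne (plSet_finite h hfin).bddAbove
  obtain ⟨g', ht, hp, heq⟩ := hmem
  refine ⟨g', ht, hp, ?_⟩
  rw [Pl_eq h g, ← heq]

theorem reach_of_ppos (h : WellFounded (Function.swap r))
    (hfin : ∀ x, {y | Relation.TransGen r x y}.Finite) :
    ∀ g, PPos r g → ∀ k, k ≤ Pl r h g →
      ∃ g', Relation.ReflTransGen r g g' ∧ PPos r g' ∧ Pl r h g' = k := by
  intro g
  refine WellFounded.induction
    (C := fun g => PPos r g → ∀ k, k ≤ Pl r h g →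
      ∃ g', Relation.ReflTransGen r g g' ∧ PPos r g' ∧ Pl r h g' = k) h.transGen g ?_
  intro x ih hP k hk
  rcases eq_or_lt_of_le hk with heq | hlt
  · exact ⟨x, Relation.ReflTransGen.refl, hP, heq.symm⟩
  · obtain ⟨g₁, ht, hp₁, heq⟩ := pl_pos_cases h (hfin x) (lt_of_le_of_lt (Nat.zero_le _) hlt)
    obtain ⟨g', hrt, hp', hpl⟩ := ih g₁ (Relation.transGen_swap.mpr ht) hp₁ k (by omega)
    exact ⟨g', (Relation.TransGen.to_reflTransGen ht).trans hrt, hp', hpl⟩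

theorem descend (h : WellFounded (Function.swap r))
    (hfin : ∀ x, {y | Relation.TransGen r x y}.Finite) {g : β} {k : ℕ}
    (hk : k < Pl r h g) :
    ∃ g', Relation.TransGen r g g' ∧ PPos r g' ∧ Pl r h g' = k := by
  obtain ⟨g₁, ht, hp₁, heq⟩ := pl_pos_cases h (hfin g) (lt_of_le_of_lt (Nat.zero_le _) hk)
  obtain ⟨g', hrt, hp', hpl⟩ := reach_of_ppos h hfin g₁ hp₁ k (by omega)
  exact ⟨g', ht.trans_left hrt, hp', hpl⟩

end Basics

theorem snim_wf {n : ℕ} (Δ : Set (Finset (Fin n))) :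
    WellFounded (Function.swap (SNimMove Δ)) := by
  have hsub : Subrelation (Function.swap (SNimMove Δ))
      (InvImage (· < ·) (fun a : Fin n → ℕ => ∑ i, a i)) := by
    rintro a b ⟨F, _, hne, hlt, heq⟩
    obtain ⟨v, hv⟩ := hne
    refine Finset.sum_lt_sum (fun i _ => ?_) ⟨v, Finset.mem_univ v, hlt v hv⟩
    by_cases hi : i ∈ F
    · exact (hlt i hi).le
    · exact (heq i hi).le
  exact Subrelation.wf hsub (InvImage.wf _ Nat.lt_wfRel.wf)

theorem semp_wf {n : ℕ} {α : Fin n → Type u} (Δ : Set (Finset (Fin n)))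
    (r : ∀ i, α i → α i → Prop) (hwf : ∀ i, WellFounded (Function.swap (r i)))
    (hfin : ∀ i, ∀ x : α i, {y | Relation.TransGen (r i) x y}.Finite) :
    WellFounded (Function.swap (SEmpMove Δ r)) := by
  have key : ∀ i (x y : α i), Relation.TransGen (r i) x y →
      (hfin i y).toFinset.card < (hfin i x).toFinset.card := by
    intro i x y ht
    apply Finset.card_lt_card
    rw [Finset.ssubset_def]
    constructor
    · intro z hz
      simp only [Set.Finite.mem_toFinset, Set.mem_setOf_eq] at hz ⊢
      exact ht.trans hz
    · intro hsubs
      have hy : y ∈ (hfin i x).toFinset := (Set.Finite.mem_toFinset _).mpr ht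
      have hyy := (Set.Finite.mem_toFinset _).mp (hsubs hy)
      exact ne_of_transGen (hwf i) hyy rfl
  have hsub : Subrelation (Function.swap (SEmpMove Δ r))
      (InvImage (· < ·) (fun (H : ∀ i, α i) => ∑ i, (hfin i (H i)).toFinset.card)) := by
    rintro a b ⟨F, _, hon, hoff, hne⟩
    have hle : ∀ i, (hfin i (a i)).toFinset.card ≤ (hfin i (b i)).toFinset.card := by
      intro i
      by_cases hi : i ∈ F
      · exact (key i _ _ (hon i hi)).le
      · rcases hoff i hi with he | hr
        · rw [he]
        · exact (key i _ _ (Relation.TransGen.single hr)).le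
    obtain ⟨i, hia⟩ := Function.ne_iff.mp hne
    have hstrict : (hfin i (a i)).toFinset.card < (hfin i (b i)).toFinset.card := by
      by_cases hi : i ∈ F
      · exact key i _ _ (hon i hi)
      · rcases hoff i hi with he | hr
        · exact absurd he hia
        · exact key i _ _ (Relation.TransGen.single hr)
    exact Finset.sum_lt_sum (fun j _ => hle j) ⟨i, Finset.mem_univ i, hstrict⟩
  exact Subrelation.wf hsub (InvImage.wf _ Nat.lt_wfRel.wf)

/-- The conjectured P-position predicate for the simplicial emperor sum. -/
def EmpP {n : ℕ} {α : Fin n → Type u} (Δ : Set (Finset (Fin n)))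
    (r : ∀ i, α i → α i → Prop) (hwf : ∀ i, WellFounded (Function.swap (r i)))
    (H : ∀ i, α i) : Prop :=
  PPos (SNimMove Δ) (fun i => Pl (r i) (hwf i) (H i)) ∧ ∀ i, PPos (r i) (H i)

theorem stepA {n : ℕ} {α : Fin n → Type u}
    {r : ∀ i, α i → α i → Prop}
    (hwf : ∀ i, WellFounded (Function.swap (r i)))
    (hfin : ∀ i, ∀ x : α i, {y | Relation.TransGen (r i) x y}.Finite)
    {Δ : Set (Finset (Fin n))} {H H' : ∀ i, α i}
    (hQ : EmpP Δ r hwf H) (hmv : SEmpMove Δ r H H') : ¬ EmpP Δ r hwf H' := by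
  obtain ⟨hNimP, hAllP⟩ := hQ
  obtain ⟨F, hF, hon, hoff, hne⟩ := hmv
  rintro ⟨hNimP', hAllP'⟩
  by_cases hc : ∀ i ∉ F, H' i = H i
  · have hFne : F.Nonempty := by
      rw [Finset.nonempty_iff_ne_empty]
      intro h0
      subst h0
      exact hne (funext fun i => hc i (Finset.notMem_empty i))
    have hmove : SNimMove Δ (fun i => Pl (r i) (hwf i) (H i))
        (fun i => Pl (r i) (hwf i) (H' i)) := by
      refine ⟨F, hF, hFne, fun v hv => ?_, fun v hv => ?_⟩
      · exact Pl_lt (hwf v) (hfin v (H v)) (hon v hv) (hAllP' v)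
      · show Pl (r v) (hwf v) (H' v) = Pl (r v) (hwf v) (H v)
        rw [hc v hv]
    exact ppos_npos_false (snim_wf Δ) _ hNimP' (hNimP _ hmove)
  · push_neg at hc
    obtain ⟨i, hiF, hne'⟩ := hc
    rcases hoff i hiF with he | hr
    · exact hne' he
    · exact ppos_npos_false (hwf i) _ (hAllP' i) (hAllP i (H' i) hr)

theorem stepB {n : ℕ} {α : Fin n → Type u}
    {r : ∀ i, α i → α i → Prop}
    (hwf : ∀ i, WellFounded (Function.swap (r i)))
    (hfin : ∀ i, ∀ x : α i, {y | Relation.TransGen (r i) x y}.Finite)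
    {Δ : Set (Finset (Fin n))}
    (hdown : ∀ F ∈ Δ, ∀ G ⊆ F, G ∈ Δ)
    (hsingle : ∀ v : Fin n, ({v} : Finset (Fin n)) ∈ Δ)
    {H : ∀ i, α i} (hnQ : ¬ EmpP Δ r hwf H) :
    ∃ H', SEmpMove Δ r H H' ∧ EmpP Δ r hwf H' := by
  classical
  have hstep : ∀ i, ¬ PPos (r i) (H i) → ∃ y, r i (H i) y ∧ PPos (r i) y :=
    fun i hi => npos_iff.mp (npos_of_not_ppos (hwf i) hi)
  obtain ⟨K, hKprop⟩ : ∃ K : ∀ i, α i, ∀ i,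
      (PPos (r i) (H i) → K i = H i) ∧
      (¬ PPos (r i) (H i) → r i (H i) (K i) ∧ PPos (r i) (K i)) := by
    refine ⟨fun i => if h : PPos (r i) (H i) then H i else (hstep i h).choose, fun i => ?_⟩
    constructor
    · intro hi; simp only [dif_pos hi]
    · intro hi; simp only [dif_neg hi]; exact (hstep i hi).choose_spec
  have hKP : ∀ i, PPos (r i) (K i) := by
    intro i
    by_cases hi : PPos (r i) (H i)
    · rw [(hKprop i).1 hi]; exact hi
    · exact ((hKprop i).2 hi).2
  have hKlt : ∀ i, ¬ PPos (r i) (H i) →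
      Pl (r i) (hwf i) (K i) < Pl (r i) (hwf i) (H i) :=
    fun i hi => Pl_lt (hwf i) (hfin i (H i))
      (Relation.TransGen.single ((hKprop i).2 hi).1) (hKP i)
  have hKle : ∀ i, Pl (r i) (hwf i) (K i) ≤ Pl (r i) (hwf i) (H i) := by
    intro i
    by_cases hi : PPos (r i) (H i)
    · rw [(hKprop i).1 hi]
    · exact (hKlt i hi).le
  have hoffK : ∀ i, K i = H i ∨ r i (H i) (K i) := by
    intro i
    by_cases hi : PPos (r i) (H i)
    · exact Or.inl ((hKprop i).1 hi)
    · exact Or.inr ((hKprop i).2 hi).1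
  by_cases hP' : PPos (SNimMove Δ) (fun i => Pl (r i) (hwf i) (K i))
  · -- move with the empty face, to K
    have hS : ∃ i, ¬ PPos (r i) (H i) := by
      by_contra hall
      push_neg at hall
      have hKH : K = H := funext fun i => (hKprop i).1 (hall i)
      rw [hKH] at hP'
      exact hnQ ⟨hP', hall⟩
    obtain ⟨i0, hi0⟩ := hS
    refine ⟨K, ⟨∅, hdown {i0} (hsingle i0) ∅ (Finset.empty_subset _), ?_, ?_, ?_⟩, hP', hKP⟩
    · intro i hi; exact absurd hi (Finset.notMem_empty i)
    · intro i _; exact hoffK i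
    · intro hcontra
      exact ne_of_transGen (hwf i0)
        (Relation.TransGen.single ((hKprop i0).2 hi0).1) (congrFun hcontra i0)
  · -- the Pl-tuple of K is an N-position of simplicial nim
    have hN := npos_of_not_ppos (snim_wf Δ) hP'
    obtain ⟨q, hqmove, hqP⟩ := npos_iff.mp hN
    obtain ⟨F, hF, hFne, hqlt, hqeq⟩ := hqmove
    have hdesc : ∀ i, i ∈ F → ∃ y, Relation.TransGen (r i) (H i) y ∧ PPos (r i) y ∧
        Pl (r i) (hwf i) y = q i := by
      intro i hi
      exact descend (hwf i) (hfin i) (lt_of_lt_of_le (hqlt i hi) (hKle i))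
    obtain ⟨G', hG'prop⟩ : ∃ G' : ∀ i, α i, ∀ i,
        (∀ hi : i ∈ F, Relation.TransGen (r i) (H i) (G' i) ∧ PPos (r i) (G' i) ∧
          Pl (r i) (hwf i) (G' i) = q i) ∧ (i ∉ F → G' i = K i) := by
      refine ⟨fun i => if hi : i ∈ F then (hdesc i hi).choose else K i, fun i => ?_⟩
      constructor
      · intro hi; simp only [dif_pos hi]; exact (hdesc i hi).choose_spec
      · intro hi; simp only [dif_neg hi]
    refine ⟨G', ⟨F, hF, fun i hi => ((hG'prop i).1 hi).1, ?_, ?_⟩, ?_, ?_⟩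
    · intro i hi
      rw [(hG'prop i).2 hi]
      exact hoffK i
    · obtain ⟨i1, hi1⟩ := hFne
      intro hcontra
      exact ne_of_transGen (hwf i1) ((hG'prop i1).1 hi1).1 (congrFun hcontra i1)
    · have hfunq : (fun i => Pl (r i) (hwf i) (G' i)) = q := by
        funext i
        by_cases hi : i ∈ F
        · exact ((hG'prop i).1 hi).2.2
        · rw [(hG'prop i).2 hi]
          exact (hqeq i hi).symm
      rw [hfunq]
      exact hqP
    · intro i
      by_cases hi : i ∈ F
      · exact ((hG'prop i).1 hi).2.1
      · rw [(hG'prop i).2 hi]; exact hKP i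

/-- Main theorem: the simplicial emperor sum `Δ(G)` is a P-position iff the tuple of
P-position lengths is a P-position of simplicial nim on `Δ` and every component is a
P-position. -/
theorem sempSum_PPos_iff (n : ℕ) (α : Fin n → Type u)
    (r : ∀ i, α i → α i → Prop)
    (hwf : ∀ i, WellFounded (Function.swap (r i)))
    (hfin : ∀ i, ∀ x : α i, {y | Relation.TransGen (r i) x y}.Finite)
    (Δ : Set (Finset (Fin n)))
    (hdown : ∀ F ∈ Δ, ∀ G ⊆ F, G ∈ Δ)
    (hsingle : ∀ v : Fin n, ({v} : Finset (Fin n)) ∈ Δ)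
    (G : ∀ i, α i) :
    PPos (SEmpMove Δ r) G ↔
      PPos (SNimMove Δ) (fun i => Pl (r i) (hwf i) (G i)) ∧
        ∀ i, PPos (r i) (G i) := by
  have main : ∀ H : ∀ i, α i, PPos (SEmpMove Δ r) H ↔ EmpP Δ r hwf H := by
    intro H
    refine WellFounded.induction
      (C := fun H => PPos (SEmpMove Δ r) H ↔ EmpP Δ r hwf H)
      (semp_wf Δ r hwf hfin).transGen H ?_
    intro x ih
    constructor
    · intro hP
      by_contra hnQ
      obtain ⟨x', hmove, hQ'⟩ := stepB hwf hfin hdown hsingle hnQ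
      have hx' : PPos (SEmpMove Δ r) x' :=
        (ih x' (Relation.TransGen.single hmove)).mpr hQ'
      exact ppos_npos_false (semp_wf Δ r hwf hfin) x' hx' (hP x' hmove)
    · intro hQ g' hmove
      have hnQ' := stepA hwf hfin hQ hmove
      obtain ⟨g'', hmove'', hQ''⟩ := stepB hwf hfin hdown hsingle hnQ'
      have hg'' : PPos (SEmpMove Δ r) g'' :=
        (ih g'' (Relation.TransGen.tail (Relation.TransGen.single hmove'') hmove)).mpr hQ''
      exact NPos.intro g' g'' hmove'' hg''
  exact main G
end

section
/- Let g₁,…,gₙ be impartial game positions. The emperor sum E(g₁,…,gₙ) is a P-position if and only if every gᵢ is a P-position and Pl(g₁) ⊕ Pl(g₂) ⊕ ⋯ ⊕ Pl(gₙ) = 0, where ⊕ is bitwise XOR. -/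
/-!
The tuples `G` all of whose components are P-positions and whose P-position lengths have nim-sum
`0` form an independent and absorbing set for the emperor-sum move, hence are exactly its
P-positions. Independent: a single move from a P-position reaches an N-position, so a move between
two such tuples changes only its chosen component, to a P-position strictly below it; that
lowers its length and so changes the nim-sum. Absorbing: move every N-component to a P-option;
if the nim-sum `x` of the new lengths is not `0`, some length `ℓ` satisfies `x ^^^ ℓ < ℓ`, and
the definition of `Pl` provides a P-follower of that component of length exactly `x ^^^ ℓ`.
-/

universe u

open Relation Function

section Game

variable {α : Type u} {r : α → α → Prop}

theorem nPos_iff_not_pPos (hw : WellFounded (swap r)) (g : α) : NPos r g ↔ ¬PPos r g := by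
  induction g using hw.induction with
  | _ g ih =>
  constructor
  · rintro ⟨_, g', hm, hp⟩ hP
    exact (ih g' hm).mp (hP g' hm) hp
  · intro hP
    obtain ⟨g', hm, hn⟩ := not_forall₂.mp hP
    exact ⟨g, g', hm, not_not.mp fun h => hn ((ih g' hm).mpr h)⟩

theorem pPos_iff_of_independent_of_absorbing (hw : WellFounded (swap r)) {C : α → Prop}
    (hind : ∀ g g', C g → r g g' → ¬C g') (habs : ∀ g, ¬C g → ∃ g', r g g' ∧ C g') (g : α) :
    PPos r g ↔ C g := by
  induction g using hw.induction with
  | _ g ih =>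
  constructor
  · intro hP
    by_contra hC
    obtain ⟨g', hm, hC'⟩ := habs g hC
    exact (nPos_iff_not_pPos hw g').mp (hP g' hm) ((ih g' hm).mpr hC')
  · intro hC g' hm
    exact (nPos_iff_not_pPos hw g').mpr fun hP => hind g g' hC hm ((ih g' hm).mp hP)

theorem exists_pPos_eq_or_move (hw : WellFounded (swap r)) (g : α) :
    ∃ b, PPos r b ∧ (b = g ∨ r g b) := by
  by_cases hg : PPos r g
  · exact ⟨g, hg, Or.inl rfl⟩
  · obtain ⟨_, b, hm, hb⟩ := (nPos_iff_not_pPos hw g).mpr hg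
    exact ⟨b, hb, Or.inr hm⟩

theorem Pl_eq_sSup (hw : WellFounded (swap r)) (g : α) :
    Pl r hw g = sSup {m | ∃ g', TransGen r g g' ∧ PPos r g' ∧ m = Pl r hw g' + 1} := by
  rw [Pl, WellFounded.fix_eq]
  simp only [transGen_swap, exists_prop]

theorem Pl_lt_of_transGen {g g' : α} (hw : WellFounded (swap r))
    (hfin : {y | TransGen r g y}.Finite) (h : TransGen r g g') (hp : PPos r g') :
    Pl r hw g' < Pl r hw g := by
  have hbdd : BddAbove {m | ∃ g', TransGen r g g' ∧ PPos r g' ∧ m = Pl r hw g' + 1} := by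
    refine ((hfin.image fun y => Pl r hw y + 1).subset ?_).bddAbove
    rintro m ⟨g', hg', -, rfl⟩
    exact ⟨g', hg', rfl⟩
  rw [Pl_eq_sSup hw g]
  exact Nat.lt_of_succ_le (le_csSup hbdd ⟨g', h, hp, rfl⟩)

theorem exists_transGen_Pl_eq_of_lt (hw : WellFounded (swap r)) (g : α) {t : ℕ}
    (ht : t < Pl r hw g) : ∃ g', TransGen r g g' ∧ PPos r g' ∧ Pl r hw g' = t := by
  induction g using hw.transGen.induction generalizing t with
  | _ g ih =>
  rw [Pl_eq_sSup] at ht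
  -- `sSup` on `ℕ` is `0` on empty and on unbounded sets, so `t < sSup S` rules out both.
  set S := {m | ∃ g', TransGen r g g' ∧ PPos r g' ∧ m = Pl r hw g' + 1}
  have hne : S.Nonempty := Set.nonempty_iff_ne_empty.mpr fun h => by simp [h] at ht
  have hbdd : BddAbove S := not_not.mp fun h => by simp [Nat.sSup_of_not_bddAbove h] at ht
  obtain ⟨g₁, hg₁, hp₁, heq⟩ := Nat.sSup_mem hne hbdd
  rw [heq, Nat.lt_succ_iff, le_iff_eq_or_lt] at ht
  rcases ht with rfl | hlt
  · exact ⟨g₁, hg₁, hp₁, rfl⟩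
  · obtain ⟨g₂, hg₂, hp₂, rfl⟩ := ih g₁ (transGen_swap.mpr hg₁) hlt
    exact ⟨g₂, hg₁.trans hg₂, hp₂, rfl⟩

end Game

theorem WellFounded.pi_eq_or_and_ne {ι : Type*} [Finite ι] {β : ι → Type*}
    {s : ∀ i, β i → β i → Prop} (hs : ∀ i, WellFounded (s i)) :
    WellFounded fun x y : ∀ i, β i => (∀ i, x i = y i ∨ s i (x i) (y i)) ∧ x ≠ y := by
  -- Compare two tuples at the first index where they differ, for some well-order on `ι`.
  refine Subrelation.wf ?_ (Pi.Lex.wellFounded WellOrderingRel hs)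
  rintro x y ⟨hle, hne⟩
  obtain ⟨i, hi, hmin⟩ := WellOrderingRel.isWellOrder.wf.has_min {i | x i ≠ y i}
    (Function.ne_iff.mp hne)
  exact ⟨i, fun j hj => not_not.mp fun h => hmin j h hj, (hle i).resolve_left hi⟩

def nimSum {n : ℕ} (v : Fin n → ℕ) : ℕ :=
  (List.ofFn v).foldr (· ^^^ ·) 0

theorem nimSum_xor_nimSum {n : ℕ} (v w : Fin n → ℕ) {i : Fin n} (h : ∀ j ≠ i, w j = v j) :
    nimSum w ^^^ nimSum v = w i ^^^ v i := by
  induction n with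
  | zero => exact i.elim0
  | succ n ih =>
    simp only [nimSum, List.ofFn_succ, List.foldr_cons] at ih ⊢
    induction i using Fin.cases with
    | zero =>
      have htail : (fun k : Fin n => w k.succ) = fun k => v k.succ :=
        funext fun k => h k.succ (Fin.succ_ne_zero k)
      rw [htail]
      simp [Nat.xor_comm, Nat.xor_left_comm]
    | succ i =>
      rw [h 0 (Fin.succ_ne_zero i).symm,
        ← ih (fun k => v k.succ) (fun k => w k.succ) fun j hj =>
          h j.succ (Fin.succ_inj.not.mpr hj)]
      simp [Nat.xor_comm, Nat.xor_left_comm, Nat.xor_assoc]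

theorem exists_mem_testBit_of_testBit_foldr_xor {b : ℕ} {l : List ℕ}
    (h : (l.foldr (· ^^^ ·) 0).testBit b) : ∃ a ∈ l, a.testBit b := by
  induction l with
  | nil => simp at h
  | cons a l ih =>
    by_cases ha : a.testBit b
    · exact ⟨a, List.mem_cons_self, ha⟩
    · obtain ⟨c, hc, hcb⟩ := ih (by simpa [Nat.testBit_xor, ha] using h)
      exact ⟨c, List.mem_cons_of_mem a hc, hcb⟩

theorem exists_xor_nimSum_lt {n : ℕ} (v : Fin n → ℕ) (hv : nimSum v ≠ 0) :
    ∃ i, nimSum v ^^^ v i < v i := by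
  obtain ⟨b, hb, hhigh⟩ := Nat.exists_most_significant_bit hv
  obtain ⟨_, ha, hab⟩ := exists_mem_testBit_of_testBit_foldr_xor hb
  obtain ⟨i, rfl⟩ := List.mem_ofFn.mp ha
  refine ⟨i, Nat.lt_of_testBit b (by simp [Nat.testBit_xor, hb, hab]) hab fun j hj => ?_⟩
  simp [Nat.testBit_xor, hhigh j hj]

section Emperor

variable {n : ℕ} {α : Fin n → Type u} {r : ∀ i, α i → α i → Prop}

theorem EmpMove.wellFounded (hwf : ∀ i, WellFounded (swap (r i))) :
    WellFounded (swap (EmpMove r)) := by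
  refine Subrelation.wf ?_ (WellFounded.pi_eq_or_and_ne fun i => (hwf i).transGen)
  rintro G' G ⟨i, hi, hj⟩
  have hi' : TransGen (swap (r i)) (G' i) (G i) := transGen_swap.mpr hi
  refine ⟨fun j => ?_, fun h => ?_⟩
  · by_cases hji : j = i
    · subst hji
      exact Or.inr hi'
    · exact (hj j hji).imp id TransGen.single
  · subst h
    exact (hwf i).transGen.asymmetric _ _ hi' hi'

theorem not_empMove_of_pPos_of_nimSum_eq_zero (hwf : ∀ i, WellFounded (swap (r i)))
    (hfin : ∀ i, ∀ x : α i, {y | TransGen (r i) x y}.Finite) {G G' : ∀ i, α i}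
    (hP : ∀ i, PPos (r i) (G i)) (hx : nimSum (fun i => Pl (r i) (hwf i) (G i)) = 0)
    (hP' : ∀ i, PPos (r i) (G' i)) (hx' : nimSum (fun i => Pl (r i) (hwf i) (G' i)) = 0) :
    ¬EmpMove r G G' := by
  rintro ⟨i, hi, hj⟩
  have hoff : ∀ j ≠ i, Pl (r j) (hwf j) (G' j) = Pl (r j) (hwf j) (G j) := fun j hji => by
    rcases hj j hji with h | h
    · rw [h]
    · exact absurd (hP' j) ((nPos_iff_not_pPos (hwf j) _).mp (hP j _ h))
  have hxor := nimSum_xor_nimSum _ _ hoff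
  rw [hx', hx, Nat.zero_xor, eq_comm, xor_eq_zero_iff] at hxor
  have hlt := Pl_lt_of_transGen (hwf i) (hfin i (G i)) hi (hP' i)
  omega

theorem exists_empMove_pPos_nimSum_eq_zero (hwf : ∀ i, WellFounded (swap (r i)))
    {G : ∀ i, α i}
    (hG : ¬((∀ i, PPos (r i) (G i)) ∧ nimSum (fun i => Pl (r i) (hwf i) (G i)) = 0)) :
    ∃ G', EmpMove r G G' ∧ (∀ i, PPos (r i) (G' i)) ∧
      nimSum (fun i => Pl (r i) (hwf i) (G' i)) = 0 := by
  choose B hBP hBG using fun i => exists_pPos_eq_or_move (hwf i) (G i)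
  by_cases hx : nimSum (fun i => Pl (r i) (hwf i) (B i)) = 0
  · refine ⟨B, ?_, hBP, hx⟩
    obtain ⟨i, hi⟩ : ∃ i, B i ≠ G i := by
      by_contra! hBG'
      exact hG ⟨fun i => hBG' i ▸ hBP i, by simpa only [hBG'] using hx⟩
    exact ⟨i, .single ((hBG i).resolve_left hi), fun j _ => hBG j⟩
  · obtain ⟨i, hi⟩ := exists_xor_nimSum_lt _ hx
    obtain ⟨g, hg, hgP, hgPl⟩ := exists_transGen_Pl_eq_of_lt (hwf i) (B i) hi
    have hGg : TransGen (r i) (G i) g := (hBG i).elim (fun h => h ▸ hg) hg.head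
    refine ⟨update B i g, ⟨i, by simpa using hGg, fun j hj => by simpa [hj] using hBG j⟩,
      fun j => ?_, ?_⟩
    · by_cases hj : j = i
      · subst hj
        simpa using hgP
      · simpa [hj] using hBP j
    · have hxor := nimSum_xor_nimSum (fun j => Pl (r j) (hwf j) (B j))
        (fun j => Pl (r j) (hwf j) (update B i g j)) (i := i) fun j hj => by simp [hj]
      simpa [hgPl] using hxor

end Emperor

/-- Emperor sum theorem: `E(g₁, …, gₙ)` is a P-position iff every `gᵢ` is a
P-position and the XOR of the P-position lengths is `0`. -/
theorem empSum_PPos_iff (n : ℕ) (α : Fin n → Type u)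
    (r : ∀ i, α i → α i → Prop)
    (hwf : ∀ i, WellFounded (Function.swap (r i)))
    (hfin : ∀ i, ∀ x : α i, {y | Relation.TransGen (r i) x y}.Finite)
    (G : ∀ i, α i) :
    PPos (EmpMove r) G ↔
      (∀ i, PPos (r i) (G i)) ∧
        (List.ofFn fun i => Pl (r i) (hwf i) (G i)).foldr (· ^^^ ·) 0 = 0 :=
  pPos_iff_of_independent_of_absorbing (EmpMove.wellFounded hwf)
    (C := fun G => (∀ i, PPos (r i) (G i)) ∧ nimSum (fun i => Pl (r i) (hwf i) (G i)) = 0)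
    (fun _ _ ⟨hP, hx⟩ hm ⟨hP', hx'⟩ =>
      not_empMove_of_pPos_of_nimSum_eq_zero hwf hfin hP hx hP' hx' hm)
    (fun _ => exists_empMove_pPos_nimSum_eq_zero hwf) G
end
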